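/- For a bounded distributive lattice D, the map χ on ideals defined by χ(I) = {a ∈ D : ∃c ∈ I, a ⪯ c} is a nucleus on the frame of ideals of D, and χ(I) ⊆ ξ(I) for every ideal I. -/
import Mathlib


def preceq {D : Type*} [Lattice D] [BoundedOrder D] (a b : D) : Prop :=
  ∀ c : D, a ⊔ c = ⊤ → b ⊔ c = ⊤

def xiSet {D : Type*} [DistribLattice D] [BoundedOrder D] (I : Set D) : Set D :=
  {a | ∀ b : D, a ⊔ b = ⊤ → ∃ c ∈ I, c ⊔ b = ⊤}

def chiSet {D : Type*} [DistribLattice D] [BoundedOrder D] (I : Set D) : Set D :=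
  {a | ∃ c ∈ I, preceq a c}

lemma preceq_refl {D : Type*} [Lattice D] [BoundedOrder D] (a : D) : preceq a a :=
  fun _ h => h

lemma preceq_of_le {D : Type*} [Lattice D] [BoundedOrder D] {a b : D} (h : a ≤ b) :
    preceq a b := fun c hc => top_le_iff.mp (hc ▸ sup_le_sup_right h c)

lemma preceq_trans {D : Type*} [Lattice D] [BoundedOrder D] {a b c : D}
    (h1 : preceq a b) (h2 : preceq b c) : preceq a c := fun d hd => h2 d (h1 d hd)

lemma preceq_sup {D : Type*} [Lattice D] [BoundedOrder D] {a b c d : D}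
    (h1 : preceq a c) (h2 : preceq b d) : preceq (a ⊔ b) (c ⊔ d) := by
  intro e he
  rw [sup_assoc] at he
  have h3 := h1 _ he
  rw [sup_comm c, sup_assoc] at h3
  have h4 := h2 _ h3
  rw [show c ⊔ d ⊔ e = d ⊔ (e ⊔ c) by ac_rfl]
  exact h4

lemma preceq_inf {D : Type*} [DistribLattice D] [BoundedOrder D] {a c d : D}
    (h1 : preceq a c) (h2 : preceq a d) : preceq a (c ⊓ d) := by
  intro e he
  rw [sup_inf_right, h1 _ he, h2 _ he, inf_top_eq]

def chiIdeal {D : Type*} [DistribLattice D] [BoundedOrder D] (I : Order.Ideal D) :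
    Order.Ideal D where
  carrier := chiSet (I : Set D)
  lower' := by
    rintro a b hba ⟨c, hc, hac⟩
    exact ⟨c, hc, preceq_trans (preceq_of_le hba) hac⟩
  nonempty' := (Set.Nonempty.mono (fun a ha => ⟨a, ha, preceq_refl a⟩) I.nonempty)
  directed' := by
    rintro a ⟨c, hc, hac⟩ b ⟨d, hd, hbd⟩
    refine ⟨a ⊔ b, ⟨c ⊔ d, I.sup_mem hc hd, preceq_sup hac hbd⟩, le_sup_left, le_sup_right⟩

/-- `χ` is a nucleus on the frame of ideals of `D` and `χ ≤ ξ`. -/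
theorem chi_nucleus_and_le_xi {D : Type*} [DistribLattice D] [BoundedOrder D] :
    (∀ I : Order.Ideal D, (I : Set D) ⊆ chiSet (I : Set D)) ∧
    (∀ I J : Order.Ideal D, (I : Set D) ⊆ J → chiSet (I : Set D) ⊆ chiSet (J : Set D)) ∧
    (∀ I : Order.Ideal D, chiSet (chiSet (I : Set D)) = chiSet (I : Set D)) ∧
    (∀ I J : Order.Ideal D,
      chiSet ((I : Set D) ∩ (J : Set D)) = chiSet (I : Set D) ∩ chiSet (J : Set D)) ∧
    (∀ I : Order.Ideal D, ∃ K : Order.Ideal D, (K : Set D) = chiSet (I : Set D)) ∧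
    (∀ I : Order.Ideal D, chiSet (I : Set D) ⊆ xiSet (I : Set D)) := by
  refine ⟨fun I a ha => ⟨a, ha, preceq_refl a⟩,
    fun I J hIJ a => ?_, fun I => ?_, fun I J => ?_,
    fun I => ⟨chiIdeal I, rfl⟩, fun I a => ?_⟩
  · rintro ⟨c, hc, hac⟩; exact ⟨c, hIJ hc, hac⟩
  · apply Set.Subset.antisymm
    · rintro a ⟨c, ⟨e, he, hce⟩, hac⟩
      exact ⟨e, he, preceq_trans hac hce⟩
    · exact fun a ha => ⟨a, ha, preceq_refl a⟩
  · apply Set.Subset.antisymm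
    · rintro a ⟨c, ⟨hcI, hcJ⟩, hac⟩
      exact ⟨⟨c, hcI, hac⟩, ⟨c, hcJ, hac⟩⟩
    · rintro a ⟨⟨c, hc, hac⟩, ⟨d, hd, had⟩⟩
      exact ⟨c ⊓ d, ⟨I.lower inf_le_left hc, J.lower inf_le_right hd⟩, preceq_inf hac had⟩
  · rintro ⟨c, hc, hac⟩ b hb
    exact ⟨c, hc, hac b hb⟩
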